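/- The canonical RFA of a regular language L is residual: every state accepts a residual language of L. -/

import Mathlib

def res {α : Type*} (L : Set (List α)) (u : List α) : Set (List α) := {v | u ++ v ∈ L}

def Res {α : Type*} (L : Set (List α)) : Set (Set (List α)) := {L' | ∃ u, L' = res L u}

/-- A language is prime in a class `𝕃` if it belongs to `𝕃` and is not the union of the
languages of `𝕃` strictly contained in it. -/
def IsPrimeIn {α : Type*} (𝕃 : Set (Set (List α))) (L : Set (List α)) : Prop :=
  L ∈ 𝕃 ∧ L ≠ ⋃₀ {L' | L' ∈ 𝕃 ∧ L' ⊂ L}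

def IsRegularLang {α : Type*} (L : Set (List α)) : Prop :=
  ∃ (σ : Type) (_ : Fintype σ) (M : DFA α σ), ∀ w, w ∈ M.accepts ↔ w ∈ L

/-- The canonical RFA of a language `L`: states are the prime residual languages of `L`. -/
def canonicalRFA {α : Type*} (L : Set (List α)) :
    NFA α {L' : Set (List α) // IsPrimeIn (Res L) L'} where
  step q a := {q' | q'.1 ⊆ res q.1 [a]}
  start := {q | q.1 ⊆ L}
  accept := {q | [] ∈ q.1}

/-- The language accepted from a single state `q` of an NFA. -/
def lq {α σ : Type*} (M : NFA α σ) (q : σ) : Set (List α) :=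
  {w | (M.evalFrom {q} w ∩ M.accept).Nonempty}

/-!
A minimal member of a finite class of languages that contains a given word is prime, since it
cannot be the union of strictly smaller members; so every member is the union of the primes it
contains. A regular language has finitely many residuals, and induction on words then shows that
each state `q` of the canonical RFA accepts exactly `q` and that the automaton accepts `L`.
-/

namespace NFA

variable {α σ : Type*} (M : NFA α σ)

theorem mem_lq_iff_mem_acceptsFrom {q : σ} {w : List α} : w ∈ lq M q ↔ w ∈ M.acceptsFrom {q} := by
  simp only [lq, mem_acceptsFrom, Set.Nonempty, Set.mem_inter_iff]
  exact exists_congr fun _ => and_comm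

theorem mem_acceptsFrom_iff_exists_lq {S : Set σ} {w : List α} :
    w ∈ M.acceptsFrom S ↔ ∃ q ∈ S, w ∈ lq M q := by
  simp only [lq, mem_acceptsFrom, Set.Nonempty, Set.mem_inter_iff, Set.mem_ofPred_eq]
  constructor
  · rintro ⟨s, hs, hsS⟩
    obtain ⟨q, hq, hsq⟩ := mem_evalFrom_iff_exists.mp hsS
    exact ⟨q, hq, s, hsq, hs⟩
  · rintro ⟨q, hq, s, hsq, hs⟩
    exact ⟨s, hs, mem_evalFrom_iff_exists.mpr ⟨q, hq, hsq⟩⟩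

theorem nil_mem_lq (q : σ) : [] ∈ lq M q ↔ q ∈ M.accept := by
  simp [mem_lq_iff_mem_acceptsFrom]

theorem cons_mem_lq (q : σ) (a : α) (w : List α) :
    a :: w ∈ lq M q ↔ ∃ q' ∈ M.step q a, w ∈ lq M q' := by
  rw [mem_lq_iff_mem_acceptsFrom, cons_mem_acceptsFrom, stepSet_singleton,
    mem_acceptsFrom_iff_exists_lq]

theorem mem_accepts_iff_exists_lq {w : List α} : w ∈ M.accepts ↔ ∃ q ∈ M.start, w ∈ lq M q :=
  M.mem_acceptsFrom_iff_exists_lq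

end NFA

section Residuals

variable {α : Type*}

theorem res_append (L : Set (List α)) (u v : List α) : res L (u ++ v) = res (res L u) v := by
  ext w
  simp [res, List.append_assoc]

theorem self_mem_Res (L : Set (List α)) : L ∈ Res L := ⟨[], rfl⟩

theorem res_mem_Res {L M : Set (List α)} (hM : M ∈ Res L) (u : List α) : res M u ∈ Res L := by
  obtain ⟨v, rfl⟩ := hM
  exact ⟨v ++ u, (res_append L v u).symm⟩

theorem IsRegularLang.finite_Res {L : Set (List α)} (hL : IsRegularLang L) : (Res L).Finite := by
  obtain ⟨σ, _, A, hA⟩ := hL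
  refine (Set.finite_range fun s : σ => {v | A.evalFrom s v ∈ A.accept}).subset ?_
  rintro _ ⟨u, rfl⟩
  refine ⟨A.eval u, Set.ext fun v => ?_⟩
  change A.evalFrom (A.evalFrom A.start u) v ∈ A.accept ↔ u ++ v ∈ L
  rw [← DFA.evalFrom_of_append]
  exact hA (u ++ v)

theorem exists_isPrimeIn_subset_of_mem {𝕃 : Set (Set (List α))} (h𝕃 : 𝕃.Finite)
    {M : Set (List α)} (hM : M ∈ 𝕃) {w : List α} (hw : w ∈ M) :
    ∃ p, IsPrimeIn 𝕃 p ∧ p ⊆ M ∧ w ∈ p := by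
  obtain ⟨p, hpM, hmin⟩ := (h𝕃.subset fun _ h => h.1).exists_le_minimal
    (s := {M' | M' ∈ 𝕃 ∧ w ∈ M'}) ⟨hM, hw⟩
  refine ⟨p, ⟨hmin.prop.1, fun hunion => ?_⟩, hpM, hmin.prop.2⟩
  obtain ⟨M', ⟨hM'𝕃, hM'p⟩, hwM'⟩ := Set.mem_sUnion.mp (hunion ▸ hmin.prop.2)
  exact hM'p.not_subset (hmin.le_of_le ⟨hM'𝕃, hwM'⟩ hM'p.subset)

end Residuals

section CanonicalRFA

variable {α : Type*} {L : Set (List α)}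

theorem lq_canonicalRFA (hL : (Res L).Finite) (q : {L' // IsPrimeIn (Res L) L'}) :
    lq (canonicalRFA L) q = q.1 := by
  ext w
  induction w generalizing q with
  | nil => exact NFA.nil_mem_lq _ q
  | cons a w ih =>
    rw [NFA.cons_mem_lq]
    simp only [ih]
    constructor
    · rintro ⟨q', hq'step, hwq'⟩
      exact hq'step hwq'
    · intro hw
      obtain ⟨p, hp, hpres, hwp⟩ := exists_isPrimeIn_subset_of_mem hL (res_mem_Res q.2.1 [a]) hw
      exact ⟨⟨p, hp⟩, hpres, hwp⟩

theorem accepts_canonicalRFA (hL : (Res L).Finite) :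
    ((canonicalRFA L).accepts : Set (List α)) = L := by
  ext w
  rw [NFA.mem_accepts_iff_exists_lq]
  simp only [lq_canonicalRFA hL]
  constructor
  · rintro ⟨q, hqL, hwq⟩
    exact hqL hwq
  · intro hw
    obtain ⟨p, hp, hpL, hwp⟩ := exists_isPrimeIn_subset_of_mem hL (self_mem_Res L) hw
    exact ⟨⟨p, hp⟩, hpL, hwp⟩

end CanonicalRFA

theorem canonicalRFA_is_residual {α : Type*} (L : Set (List α)) (hreg : IsRegularLang L)
    (q : {L' : Set (List α) // IsPrimeIn (Res L) L'}) :
    lq (canonicalRFA L) q ∈ Res ((canonicalRFA L).accepts : Set (List α)) := by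
  obtain ⟨u, hu⟩ := q.2.1
  refine ⟨u, ?_⟩
  rw [lq_canonicalRFA hreg.finite_Res, accepts_canonicalRFA hreg.finite_Res, hu]
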